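/- arXiv:1201.4419 — 2 statements merged into one kernel-verified Lean document; each statement's English description precedes it below -/
import Mathlib

section
/- For a formal pseudo-difference operator A, the strictly negative part of Δ⁻¹A satisfies P_{<0}(Δ⁻¹A) = Δ⁻¹ P_{<0}(A) + Δ⁻¹ P_0(A*), where P_{<0} projects onto terms of negative order in Δ, P_0 extracts the zero-order coefficient, and A* is the formal adjoint. -/
/-!
Split `A = A₋ + A₊` into its parts of negative and nonnegative order in `Λ`. The operator
`Δ⁻¹ A₋ = Σ_{j<0} Λ^j A₋` has only negative order, so it survives `P_{<0}` unchanged. For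
`A₊ = Σ_{k ≥ 0} a_k Λ^k`, the coefficient of `Λ^m` (`m < 0`) in `Δ⁻¹ A₊` is
`Σ_{k ≥ 0} a_k(n + m - k)`, which is `P_0(A*)` evaluated at `n + m`: exactly the coefficient of
`Λ^m` in `Δ⁻¹ P_0(A*)`. Boundedness above makes every coefficient sum finite, so `Δ⁻¹` is
additive on `A = A₋ + A₊`.
-/

namespace DiscreteKP

/-- The space `F` of functions on the lattice `ℤ`. -/
abbrev F := ℤ → ℝ

/-- A formal pseudo-difference operator, represented by its coefficients in the
shift basis: `a k n` is the coefficient of `Λ^k` at the site `n`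
(so `a` represents `Σ_k a_k(n) Λ^k`, with `Δ = Λ - 1`). -/
abbrev PDO := ℤ → ℤ → ℝ

/-- Composition in the ring of formal pseudo-difference operators. -/
noncomputable def pmul (a b : PDO) : PDO := fun m n => ∑' j : ℤ, a j n * b (m - j) (n + j)

/-- A function viewed as a (multiplication) operator. -/
def ofFun (f : F) : PDO := fun k n => if k = 0 then f n else 0

/-- The difference operator `Δ = Λ - 1` as a pseudo-difference operator. -/
def pdelta : PDO := fun m _ => if m = 1 then 1 else if m = 0 then -1 else 0

/-- The formal inverse `Δ⁻¹ = Σ_{k<0} Λ^k`. -/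
def pdeltaInv : PDO := fun m _ => if m < 0 then 1 else 0

/-- The formal adjoint: `(f Λ^k)* = Λ^{-k} ∘ f`. -/
def adj (a : PDO) : PDO := fun m n => a (-m) (n + m)

/-- The action of a pseudo-difference operator on a function (when defined). -/
noncomputable def applyOp (a : PDO) (f : F) : F := fun n => ∑' m : ℤ, a m n * f (n + m)

/-- Projection `P_{<0}` onto the part of strictly negative order in `Δ`
(in the shift basis this is the part with strictly negative powers of `Λ`). -/
def Pneg (a : PDO) : PDO := fun m n => if m < 0 then a m n else 0

/-- Projection `R_+` onto the nonnegative (local difference operator) part. -/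
def Ppos (a : PDO) : PDO := fun m n => if 0 ≤ m then a m n else 0

/-- `P_0`: the zero-order coefficient (in `Δ`) of an operator of `F(Δ)`,
namely `Σ_{k ≥ 0} a_k` in the shift basis. -/
noncomputable def P0 (a : PDO) : F := fun n => ∑' k : ℕ, a (k : ℤ) n

/-- `P_0(A*)`: the zero-order coefficient (in `Δ*`) of the formal adjoint of `a`,
namely `Σ_{m ≤ 0} (adj a)_m` in the shift basis. -/
noncomputable def P0star (a : PDO) : F := fun n => ∑' k : ℕ, adj a (-(k : ℤ)) n

/-- The residue: the coefficient of `Δ⁻¹`. -/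
def res (a : PDO) : F := fun n => a (-1) n

/-- The shift operator `Λ` on functions. -/
def sh (f : F) : F := fun n => f (n + 1)

/-- The backward shift `Λ⁻¹` on functions. -/
def shInv (f : F) : F := fun n => f (n - 1)

/-- The difference operator `Δ` on functions. -/
def dif (f : F) : F := fun n => f (n + 1) - f n

/-- A genuine formal pseudo-difference operator: finitely many positive-order terms. -/
def BoundedAbove (a : PDO) : Prop := ∃ d : ℤ, ∀ m n : ℤ, d < m → a m n = 0

/-- A local difference operator: a finite sum `Σ_{j=0}^d a_j Δ^j`. -/
def IsLocal (a : PDO) : Prop := ∃ d : ℤ, ∀ m n : ℤ, (m < 0 ∨ d < m) → a m n = 0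

/-- The rank-one operator `φ Δ⁻¹ ψ`. -/
noncomputable def ghost (φ ψ : F) : PDO := pmul (ofFun φ) (pmul pdeltaInv (ofFun ψ))

end DiscreteKP

namespace DiscreteKP

theorem Pneg_add (a b : PDO) : Pneg (a + b) = Pneg a + Pneg b := by
  funext m n
  simp only [Pneg, Pi.add_apply]
  split_ifs <;> simp

theorem Pneg_add_Ppos (a : PDO) : Pneg a + Ppos a = a := by
  funext m n
  simp only [Pneg, Ppos, Pi.add_apply]
  split_ifs <;> first | omega | simp

theorem boundedAbove_Pneg (a : PDO) : BoundedAbove (Pneg a) :=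
  ⟨-1, fun m n hm => if_neg (by omega)⟩

theorem BoundedAbove.Ppos {a : PDO} (ha : BoundedAbove a) : BoundedAbove (Ppos a) := by
  obtain ⟨d, hd⟩ := ha
  exact ⟨d, fun m n hm => by simp only [DiscreteKP.Ppos, hd m n hm, ite_self]⟩

theorem pmul_add {a b c : PDO}
    (hb : ∀ m n, Summable fun j => a j n * b (m - j) (n + j))
    (hc : ∀ m n, Summable fun j => a j n * c (m - j) (n + j)) :
    pmul a (b + c) = pmul a b + pmul a c := by
  funext m n
  simp only [pmul, Pi.add_apply, mul_add]
  exact (hb m n).tsum_add (hc m n)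

theorem BoundedAbove.summable_pdeltaInv_mul {b : PDO} (hb : BoundedAbove b) (m n : ℤ) :
    Summable fun j => pdeltaInv j n * b (m - j) (n + j) := by
  obtain ⟨d, hd⟩ := hb
  refine summable_of_ne_finset_zero (s := Finset.Icc (m - d) 0) fun j hj => ?_
  rw [Finset.mem_Icc, not_and_or, not_le, not_le] at hj
  rcases hj with hj | hj
  · rw [hd _ _ (by omega), mul_zero]
  · rw [pdeltaInv, if_neg (by omega), zero_mul]

theorem Pneg_pmul_pdeltaInv_Pneg (a : PDO) :
    Pneg (pmul pdeltaInv (Pneg a)) = pmul pdeltaInv (Pneg a) := by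
  funext m n
  by_cases hm : m < 0
  · exact if_pos hm
  · have hterm : ∀ j, pdeltaInv j n * Pneg a (m - j) (n + j) = 0 := fun j => by
      by_cases hj : j < 0
      · rw [Pneg, if_neg (by omega), mul_zero]
      · rw [pdeltaInv, if_neg hj, zero_mul]
    rw [Pneg, if_neg hm]
    exact ((tsum_congr hterm).trans tsum_zero).symm

theorem pmul_pdeltaInv_ofFun_apply (f : F) (m n : ℤ) :
    pmul pdeltaInv (ofFun f) m n = if m < 0 then f (n + m) else 0 := by
  rw [pmul, tsum_eq_single m fun j hj => by simp [ofFun, sub_ne_zero.mpr hj.symm]]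
  simp [pdeltaInv, ofFun]

theorem Pneg_pmul_pdeltaInv_Ppos (a : PDO) :
    Pneg (pmul pdeltaInv (Ppos a)) = pmul pdeltaInv (ofFun (P0star a)) := by
  funext m n
  rw [pmul_pdeltaInv_ofFun_apply, Pneg]
  split_ifs with hm
  · -- reindex `j = m - k`: the terms with `j < 0 ≤ m - j` are exactly those with `j ≤ m`
    have hinj : Function.Injective fun k : ℕ => m - (k : ℤ) := fun x y hxy => by
      simp only at hxy
      omega
    have hsupp : Function.support (fun j => pdeltaInv j n * Ppos a (m - j) (n + j)) ⊆
        Set.range fun k : ℕ => m - (k : ℤ) := by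
      intro j hj
      rw [Function.mem_support] at hj
      have hmj : 0 ≤ m - j := by
        by_contra h
        exact hj (by rw [Ppos, if_neg h, mul_zero])
      exact ⟨(m - j).toNat, by simp only; omega⟩
    rw [pmul, ← hinj.tsum_eq hsupp, P0star]
    refine tsum_congr fun k => ?_
    rw [pdeltaInv, if_pos (by omega), one_mul, Ppos, if_pos (by omega), adj]
    congr 1 <;> omega
  · rfl

/-- `P_{<0}(Δ⁻¹A) = Δ⁻¹ P_{<0}(A) + Δ⁻¹ P_0(A*)` for a formal
pseudo-difference operator `A`, where `P_0(A*)` is the zero-order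
coefficient of the formal adjoint of `A`. -/
theorem Pneg_deltaInv_mul (a : PDO) (ha : BoundedAbove a) :
    Pneg (pmul pdeltaInv a) =
      pmul pdeltaInv (Pneg a) + pmul pdeltaInv (ofFun (P0star a)) := by
  calc Pneg (pmul pdeltaInv a)
      = Pneg (pmul pdeltaInv (Pneg a + Ppos a)) := by rw [Pneg_add_Ppos]
    _ = Pneg (pmul pdeltaInv (Pneg a)) + Pneg (pmul pdeltaInv (Ppos a)) := by
        rw [pmul_add (boundedAbove_Pneg a).summable_pdeltaInv_mul
          ha.Ppos.summable_pdeltaInv_mul, Pneg_add]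
    _ = pmul pdeltaInv (Pneg a) + pmul pdeltaInv (ofFun (P0star a)) := by
        rw [Pneg_pmul_pdeltaInv_Pneg, Pneg_pmul_pdeltaInv_Ppos]

end DiscreteKP
end

section
/- If α and β are local difference operators (finite sums of nonnegative powers of Δ), then res(Δ⁻¹ α β Δ⁻¹) = res(Δ⁻¹ P_0(α*) β Δ⁻¹) + res(Δ⁻¹ α P_0(β) Δ⁻¹), where P_0 extracts zero-order parts and α* is the formal adjoint of α. -/
/-!
In the shift basis `res(Δ⁻¹ α β Δ⁻¹)(n)` is the finite sum of `α_i(n+k) β_j(n+k+i)` over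
`i, j ≥ 0` and `-(i+j) ≤ k < 0`. Cut the `k`-range at `-i`: for `k ≥ -i` the sum over `j` is
`P_0(β)(n+k+i)`, giving `res(Δ⁻¹ α P_0(β) Δ⁻¹)`; for `k < -i`, after the shift `k ↦ k - i`,
the sum over `i` of `α_i(n+k-i)` is `P_0(α*)(n+k)`, giving `res(Δ⁻¹ P_0(α*) β Δ⁻¹)`.
-/

namespace DiscreteKP

open Finset

theorem tsum_ite_mem_finset {β M : Type*} [AddCommMonoid M] [TopologicalSpace M] [DecidableEq β]
    (s : Finset β) (g : β → M) : ∑' k, (if k ∈ s then g k else 0) = ∑ k ∈ s, g k := by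
  rw [tsum_eq_sum fun k hk => if_neg hk, sum_extend_by_zero]

theorem tsum_natCast_eq_tsum_int {M : Type*} [AddCommMonoid M] [TopologicalSpace M] {g : ℤ → M}
    (hg : ∀ c < 0, g c = 0) : ∑' t : ℕ, g t = ∑' c : ℤ, g c :=
  Nat.cast_injective.tsum_eq fun c hc => ⟨c.toNat, Int.toNat_of_nonneg (not_lt.1 (mt (hg c) hc))⟩

def SupportedIn (a : PDO) (s : Finset ℤ) : Prop := ∀ k ∉ s, ∀ n, a k n = 0

theorem IsLocal.exists_supportedIn {a : PDO} (ha : IsLocal a) : ∃ d, SupportedIn a (Icc 0 d) := by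
  obtain ⟨d, hd⟩ := ha
  exact ⟨d, fun k hk n => hd k n (by rw [mem_Icc] at hk; omega)⟩

theorem supportedIn_ofFun (f : F) : SupportedIn (ofFun f) {0} :=
  fun _ hk _ => if_neg (mem_singleton.not.1 hk)

theorem pmul_apply_of_supportedIn {a : PDO} {s : Finset ℤ} (ha : SupportedIn a s) (b : PDO)
    (m n : ℤ) : pmul a b m n = ∑ j ∈ s, a j n * b (m - j) (n + j) :=
  tsum_eq_sum fun j hj => by rw [ha j hj, zero_mul]

theorem P0_apply_of_supportedIn {b : PDO} {d : ℤ} (hb : SupportedIn b (Icc 0 d)) (n : ℤ) :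
    P0 b n = ∑ j ∈ Icc 0 d, b j n := by
  have hneg : ∀ j < 0, b j n = 0 := fun j hj => hb j (by rw [mem_Icc]; omega) n
  rw [P0, tsum_natCast_eq_tsum_int (g := fun j => b j n) hneg]
  exact tsum_eq_sum fun j hj => hb j hj n

theorem P0star_apply_of_supportedIn {a : PDO} {d : ℤ} (ha : SupportedIn a (Icc 0 d)) (n : ℤ) :
    P0star a n = ∑ i ∈ Icc 0 d, a i (n - i) := by
  have hneg : ∀ i < 0, a i (n - i) = 0 := fun i hi => ha i (by rw [mem_Icc]; omega) _
  simp only [P0star, adj, neg_neg, ← sub_eq_add_neg]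
  rw [tsum_natCast_eq_tsum_int (g := fun i => a i (n - i)) hneg]
  exact tsum_eq_sum fun i hi => ha i hi _

theorem sum_Ico_neg_add_eq {M : Type*} [AddCommMonoid M] (f : ℤ → M) {i j : ℤ} (hi : 0 ≤ i)
    (hj : 0 ≤ j) :
    ∑ k ∈ Ico (-(i + j)) 0, f k = ∑ k ∈ Ico (-j) 0, f (k - i) + ∑ k ∈ Ico (-i) 0, f k := by
  have hshift : ∑ k ∈ Ico (-j) 0, f (k - i) = ∑ k ∈ Ico (-(i + j)) (-i), f k := by
    simp only [sub_eq_add_neg, sum_Ico_add']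
    congr 2 <;> ring
  rw [hshift, ← sum_union (Ico_disjoint_Ico_consecutive _ _ _),
    Ico_union_Ico_eq_Ico (by omega) (by omega)]

theorem res_deltaInv_mul_mul_deltaInv {A B : PDO} {s t : Finset ℤ} (hA : SupportedIn A s)
    (hB : SupportedIn B t) (n : ℤ) :
    res (pmul pdeltaInv (pmul A (pmul B pdeltaInv))) n =
      ∑ i ∈ s, ∑ j ∈ t, ∑ k ∈ Ico (-(i + j)) 0, A i (n + k) * B j (n + k + i) := by
  set g : ℤ → ℤ → ℤ → ℝ := fun i j k =>
    if k ∈ Ico (-(i + j)) 0 then A i (n + k) * B j (n + k + i) else 0 with hg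
  have hterm : ∀ k, pdeltaInv k n * pmul A (pmul B pdeltaInv) (-1 - k) (n + k) =
      ∑ i ∈ s, ∑ j ∈ t, g i j k := by
    intro k
    simp only [hg, pmul_apply_of_supportedIn hA, pmul_apply_of_supportedIn hB, pdeltaInv, mul_sum,
      mem_Ico]
    refine sum_congr rfl fun i _ => sum_congr rfl fun j _ => ?_
    split_ifs <;> first | (exfalso; omega) | ring
  have hsummable : ∀ i j, Summable (g i j) := fun i j =>
    summable_of_ne_finset_zero fun k hk => if_neg hk
  calc res (pmul pdeltaInv (pmul A (pmul B pdeltaInv))) n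
      = ∑' k, ∑ i ∈ s, ∑ j ∈ t, g i j k := tsum_congr hterm
    _ = ∑ i ∈ s, ∑ j ∈ t, ∑' k, g i j k := by
        rw [Summable.tsum_finsetSum fun i _ => summable_sum fun j _ => hsummable i j]
        exact sum_congr rfl fun i _ => Summable.tsum_finsetSum fun j _ => hsummable i j
    _ = _ := by simp only [hg, tsum_ite_mem_finset]

theorem res_deltaInv_P0star_mul_deltaInv {α β : PDO} {a : ℤ} {t : Finset ℤ}
    (hα : SupportedIn α (Icc 0 a)) (hβ : SupportedIn β t) (n : ℤ) :
    res (pmul pdeltaInv (pmul (ofFun (P0star α)) (pmul β pdeltaInv))) n =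
      ∑ i ∈ Icc 0 a, ∑ j ∈ t, ∑ k ∈ Ico (-j) 0, α i (n + k - i) * β j (n + k) := by
  rw [res_deltaInv_mul_mul_deltaInv (supportedIn_ofFun _) hβ, sum_singleton]
  simp only [zero_add, add_zero, ofFun, if_true, P0star_apply_of_supportedIn hα, sum_mul]
  exact (sum_congr rfl fun j _ => sum_comm).trans sum_comm

theorem res_deltaInv_mul_P0_mul_deltaInv {α β : PDO} {s : Finset ℤ} {b : ℤ}
    (hα : SupportedIn α s) (hβ : SupportedIn β (Icc 0 b)) (n : ℤ) :
    res (pmul pdeltaInv (pmul α (pmul (ofFun (P0 β)) pdeltaInv))) n =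
      ∑ i ∈ s, ∑ j ∈ Icc 0 b, ∑ k ∈ Ico (-i) 0, α i (n + k) * β j (n + k + i) := by
  rw [res_deltaInv_mul_mul_deltaInv hα (supportedIn_ofFun _)]
  simp only [sum_singleton, add_zero, ofFun, if_true, P0_apply_of_supportedIn hβ, mul_sum]
  exact sum_congr rfl fun i _ => sum_comm

/-- For local difference operators `α`, `β`:
`res(Δ⁻¹ α β Δ⁻¹) = res(Δ⁻¹ P_0(α*) β Δ⁻¹) + res(Δ⁻¹ α P_0(β) Δ⁻¹)`. -/
theorem res_deltaInv_local (α β : PDO) (hα : IsLocal α) (hβ : IsLocal β) :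
    res (pmul pdeltaInv (pmul α (pmul β pdeltaInv))) =
      res (pmul pdeltaInv (pmul (ofFun (P0star α)) (pmul β pdeltaInv)))
        + res (pmul pdeltaInv (pmul α (pmul (ofFun (P0 β)) pdeltaInv))) := by
  obtain ⟨a, hα⟩ := hα.exists_supportedIn
  obtain ⟨b, hβ⟩ := hβ.exists_supportedIn
  funext n
  rw [Pi.add_apply, res_deltaInv_mul_mul_deltaInv hα hβ, res_deltaInv_P0star_mul_deltaInv hα hβ,
    res_deltaInv_mul_P0_mul_deltaInv hα hβ, ← sum_add_distrib]
  refine sum_congr rfl fun i hi => ?_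
  rw [← sum_add_distrib]
  refine sum_congr rfl fun j hj => ?_
  rw [sum_Ico_neg_add_eq _ (mem_Icc.1 hi).1 (mem_Icc.1 hj).1]
  simp only [← add_sub_assoc, sub_add_cancel]

end DiscreteKP
end
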